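/- Let D be distributed according to the H-Multinomial distribution with parameters (s, q, λ). Then for every nonzero ε ∈ {0,1}^p and every coordinate j ∈ {1,…,p}, the conditional expectation of D_j given that the activation pattern e(D) equals ε is E[D_j | e(D) = ε] = ε_j · (1 + s λ_j / Σ_{u=1}^p λ_u ε_u). -/

import Mathlib

open scoped BigOperators

/-- Activation pattern: `act d j = 1` if word `j` appears in document `d`, else `0`. -/
def act {p : ℕ} (d : Fin p → ℕ) (j : Fin p) : ℕ := if 0 < d j then 1 else 0

/-- Repetition vector: occurrences beyond the first appearance. -/
def rep {p : ℕ} (d : Fin p → ℕ) (j : Fin p) : ℕ := d j - act d j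

/-- The hypergraph-induced multinomial (H-Multinomial) mass function with
parameters `(s, q, lam)`. -/
noncomputable def hPMF {p : ℕ} (s : ℕ) (q lam : Fin p → ℝ) (d : Fin p → ℕ) : ℝ :=
  if d = 0 then ∏ j, (1 - q j)
  else if (∑ j, rep d j) = s then
    ((s.factorial : ℝ) / ∏ j, ((rep d j).factorial : ℝ)) *
      (∏ j, (q j) ^ act d j * (1 - q j) ^ (1 - act d j)) *
      (∏ j, ((lam j * (act d j : ℝ)) / (∑ u, lam u * (act d u : ℝ))) ^ rep d j)
  else 0


/-!
Given `e(D) = ε` we have `D = ε + r(D)`, and the mass factors as `actProb q ε`, which does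
not depend on `r(D)`, times the multinomial law of `s` trials with cell probabilities
`repProb lam ε u = λ_u ε_u / Σ_v λ_v ε_v`. By the multinomial theorem the conditioning event
has probability `actProb q ε`, and the conditional mean of `D_j` is `ε_j + s · repProb lam ε j`,
the multinomial mean `n x_j (Σ x)^(n-1)` coming from the index shift `k ↦ k - δ_j`.
-/

open Finset

namespace Nat

theorem cast_multinomial {α K : Type*} [Semifield K] [CharZero K] (s : Finset α)
    (f : α → ℕ) :
    (multinomial s f : K) = (∑ i ∈ s, f i)! / ∏ i ∈ s, ((f i)! : K) := by
  rw [multinomial, Nat.cast_div (prod_factorial_dvd_factorial_sum s f)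
    (Nat.cast_ne_zero.2 (prod_factorial_pos s f).ne'), Nat.cast_prod]

theorem succ_mul_multinomial_add_single {α : Type*} [DecidableEq α] {s : Finset α} {j : α}
    (hj : j ∈ s) (f : α → ℕ) :
    (f j + 1) * multinomial s (f + Pi.single j 1) = (∑ i ∈ s, f i + 1) * multinomial s f := by
  have hj' : j ∉ s.erase j := notMem_erase j s
  have hoff : ∀ i ∈ s.erase j, (f + Pi.single j 1 : α → ℕ) i = f i := fun i hi => by
    simp [ne_of_mem_erase hi]
  rw [← insert_erase hj, multinomial_insert hj', multinomial_insert hj', sum_insert hj',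
    multinomial_congr hoff, sum_congr rfl hoff]
  simp only [Pi.add_apply, Pi.single_eq_same]
  rw [← mul_assoc, ← mul_assoc, add_right_comm, mul_comm (f j + 1), ← add_one_mul_choose_eq]

end Nat

namespace Finset

theorem prod_pow_add_single {α R : Type*} [DecidableEq α] [CommMonoid R] {s : Finset α} {j : α}
    (hj : j ∈ s) (x : α → R) (m : α → ℕ) :
    ∏ i ∈ s, x i ^ (m + Pi.single j 1 : α → ℕ) i = x j * ∏ i ∈ s, x i ^ m i := by
  simp only [Pi.add_apply, pow_add, prod_mul_distrib, mul_comm (x j)]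
  congr 1
  rw [prod_eq_single_of_mem j hj fun i _ hi => by simp [hi], Pi.single_eq_same, pow_one]

theorem sum_piAntidiag_apply_mul_multinomial_mul_prod_pow {α R : Type*} [DecidableEq α]
    [CommSemiring R] {s : Finset α} {j : α} (hj : j ∈ s) (x : α → R) (n : ℕ) :
    ∑ k ∈ piAntidiag s n, (k j : R) * (Nat.multinomial s k * ∏ i ∈ s, x i ^ k i)
      = n * x j * (∑ i ∈ s, x i) ^ (n - 1) := by
  cases n with
  | zero => simp
  | succ n =>
    have sub_add_single : ∀ k : α → ℕ, k j ≠ 0 → k - Pi.single j 1 + Pi.single j 1 = k :=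
      fun k hk => funext fun i => by
        by_cases hi : i = j
        · subst hi; simp; omega
        · simp [hi]
    have sum_add_single : ∀ m : α → ℕ, s.sum (m + Pi.single j 1) = s.sum m + 1 := fun m =>
      sum_add_distrib.trans (by rw [sum_pi_single', if_pos hj])
    rw [← sum_filter_of_ne (p := fun k => k j ≠ 0) fun k _ h hk => h (by simp [hk]),
      add_tsub_cancel_right, sum_pow_eq_sum_piAntidiag, mul_sum]
    symm
    refine sum_nbij' (· + Pi.single j 1) (· - Pi.single j 1) ?_ ?_ ?_ ?_ ?_
    · intro m hm
      simp only [mem_piAntidiag] at hm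
      rw [mem_filter, mem_piAntidiag]
      refine ⟨⟨by rw [sum_add_single, hm.1], fun i hi => ?_⟩, by simp⟩
      by_cases hij : i = j
      · exact hij ▸ hj
      · exact hm.2 i (by simpa [hij] using hi)
    · intro k hk
      simp only [mem_filter, mem_piAntidiag] at hk ⊢
      obtain ⟨⟨hsum, hsupp⟩, hkj⟩ := hk
      refine ⟨?_, fun i hi => hsupp i fun h => hi (by simp [h])⟩
      rw [← sub_add_single k hkj, sum_add_single] at hsum
      omega
    · intro m _; simp
    · intro k hk
      exact sub_add_single k (mem_filter.1 hk).2
    · intro m hm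
      have key := congrArg (Nat.cast (R := R)) (Nat.succ_mul_multinomial_add_single hj m)
      rw [(mem_piAntidiag.1 hm).1] at key
      push_cast at key
      rw [prod_pow_add_single hj, Pi.add_apply, Pi.single_eq_same]
      push_cast
      rw [← mul_assoc (_ + 1), key]
      ring

end Finset

section HMultinomial

variable {p : ℕ}

noncomputable def actProb (q : Fin p → ℝ) (ε : Fin p → ℕ) : ℝ :=
  ∏ u, q u ^ ε u * (1 - q u) ^ (1 - ε u)

noncomputable def repProb (lam : Fin p → ℝ) (ε : Fin p → ℕ) (u : Fin p) : ℝ :=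
  lam u * ε u / ∑ v, lam v * ε v

lemma act_zero : act (0 : Fin p → ℕ) = 0 := by
  funext u
  simp [act]

lemma act_add_rep (d : Fin p → ℕ) : act d + rep d = d := by
  funext u
  simp only [act, rep, Pi.add_apply]
  split <;> omega

lemma rep_add_of_act_add_eq {ε k : Fin p → ℕ} (h : act (ε + k) = ε) : rep (ε + k) = k := by
  funext u
  simp only [rep, h, Pi.add_apply]
  omega

lemma act_add_of_le_one {ε k : Fin p → ℕ} (hε : ∀ u, ε u ≤ 1) (hk : ∀ u, ε u = 0 → k u = 0) :
    act (ε + k) = ε := by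
  funext u
  have := hε u
  have := hk u
  simp only [act, Pi.add_apply]
  split <;> omega

lemma actProb_ne_zero {q : Fin p → ℝ} (hq : ∀ u, q u ≠ 0) (hq' : ∀ u, q u ≠ 1)
    (ε : Fin p → ℕ) : actProb q ε ≠ 0 :=
  prod_ne_zero_iff.2 fun u _ => mul_ne_zero (pow_ne_zero _ (hq u))
    (pow_ne_zero _ (sub_ne_zero.2 (hq' u).symm))

lemma sum_repProb {lam : Fin p → ℝ} {ε : Fin p → ℕ} (h : ∑ v, lam v * ε v ≠ 0) :
    ∑ u, repProb lam ε u = 1 := by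
  simp only [repProb, ← sum_div, div_self h]

lemma hPMF_of_act_eq {s : ℕ} {q lam : Fin p → ℝ} {ε d : Fin p → ℕ} (hε0 : ε ≠ 0)
    (hd : act d = ε) :
    hPMF s q lam d = if ∑ u, rep d u = s then
      actProb q ε * (Nat.multinomial univ (rep d) * ∏ u, repProb lam ε u ^ rep d u) else 0 := by
  have hd0 : d ≠ 0 := fun h => hε0 (by rw [← hd, h, act_zero])
  unfold hPMF
  rw [if_neg hd0, hd]
  split_ifs with hs
  · rw [Nat.cast_multinomial, hs, actProb]
    unfold repProb
    ring
  · rfl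

lemma tsum_ite_act_eq_mul_hPMF {s : ℕ} {q lam : Fin p → ℝ} {ε : Fin p → ℕ} (hε : ∀ u, ε u ≤ 1)
    (hε0 : ε ≠ 0) (g : (Fin p → ℕ) → ℝ) :
    ∑' d : Fin p → ℕ, (if act d = ε then g d * hPMF s q lam d else 0)
      = actProb q ε * ∑ k ∈ piAntidiag univ s,
          g (ε + k) * (Nat.multinomial univ k * ∏ u, repProb lam ε u ^ k u) := by
  have hsupp : ∀ d ∉ (piAntidiag univ s).map (addLeftEmbedding ε),
      (if act d = ε then g d * hPMF s q lam d else 0) = 0 := by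
    intro d hd
    split_ifs with hact
    · rw [hPMF_of_act_eq hε0 hact, if_neg, mul_zero]
      intro hs
      refine hd (mem_map.2 ⟨rep d, mem_piAntidiag.2 ⟨hs, fun _ _ => mem_univ _⟩, ?_⟩)
      simpa [hact] using act_add_rep d
    · rfl
  rw [tsum_eq_sum hsupp, sum_map, mul_sum]
  refine sum_congr rfl fun k hk => ?_
  simp only [addLeftEmbedding_apply]
  by_cases hact : act (ε + k) = ε
  · rw [if_pos hact, hPMF_of_act_eq hε0 hact, rep_add_of_act_add_eq hact,
      if_pos (mem_piAntidiag.1 hk).1]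
    ring
  · -- `k` charges an inactive coordinate, whose cell probability `repProb lam ε u` is `0`
    obtain ⟨u, hεu, hku⟩ : ∃ u, ε u = 0 ∧ k u ≠ 0 := by
      by_contra! h
      exact hact (act_add_of_le_one hε h)
    rw [if_neg hact, prod_eq_zero (mem_univ u) (by simp [repProb, hεu, hku])]
    simp

end HMultinomial

theorem hPMF_conditional_expectation_general (p : ℕ) (s : ℕ) (q lam : Fin p → ℝ)
    (hq : ∀ j, 0 < q j ∧ q j < 1) (hlam : ∀ j, 0 < lam j)
    (ε : Fin p → ℕ) (hε : ∀ j, ε j ≤ 1) (hεne : ε ≠ 0) (j : Fin p) :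
    (∑' d : Fin p → ℕ, (if act d = ε then (d j : ℝ) * hPMF s q lam d else 0)) /
        (∑' d : Fin p → ℕ, (if act d = ε then hPMF s q lam d else 0))
      = (ε j : ℝ) * (1 + (s : ℝ) * lam j / ∑ u, lam u * (ε u : ℝ)) := by
  have hΛ : ∑ u, lam u * (ε u : ℝ) ≠ 0 := by
    obtain ⟨u, hu⟩ := Function.ne_iff.1 hεne
    exact (sum_pos' (fun v _ => mul_nonneg (hlam v).le (Nat.cast_nonneg _))
      ⟨u, mem_univ u, mul_pos (hlam u) (Nat.cast_pos.2 (Nat.pos_of_ne_zero hu))⟩).ne'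
  have hnum := tsum_ite_act_eq_mul_hPMF (s := s) (q := q) (lam := lam) hε hεne fun d => (d j : ℝ)
  have hden := tsum_ite_act_eq_mul_hPMF (s := s) (q := q) (lam := lam) hε hεne fun _ => 1
  simp only [one_mul] at hden
  rw [hnum, hden, ← sum_pow_eq_sum_piAntidiag, sum_repProb hΛ, one_pow, mul_one,
    mul_div_cancel_left₀ _ (actProb_ne_zero (fun u => (hq u).1.ne') (fun u => (hq u).2.ne) ε)]
  simp only [Pi.add_apply, Nat.cast_add, add_mul, sum_add_distrib, ← mul_sum,
    ← sum_pow_eq_sum_piAntidiag, sum_piAntidiag_apply_mul_multinomial_mul_prod_pow (mem_univ j),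
    sum_repProb hΛ, one_pow, mul_one]
  rw [repProb]
  ring

/-- conditional expectation of a coordinate given the activation pattern.
For any nonzero `ε ∈ {0,1}^p` and coordinate `j`,
`E[D_j | e(D) = ε] = ε_j (1 + s λ_j / Σ_u λ_u ε_u)`, expressed as the ratio of the
weighted mass to the mass of the conditioning event. -/
theorem hPMF_conditional_expectation (p : ℕ) (hp : 1 ≤ p) (s : ℕ) (q lam : Fin p → ℝ)
    (hq : ∀ j, 0 < q j ∧ q j < 1) (hlam : ∀ j, 0 < lam j)
    (hlamsum : ∑ j, lam j = (p : ℝ))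
    (ε : Fin p → ℕ) (hε : ∀ j, ε j ≤ 1) (hεne : ε ≠ 0) (j : Fin p) :
    (∑' d : Fin p → ℕ, (if act d = ε then (d j : ℝ) * hPMF s q lam d else 0)) /
        (∑' d : Fin p → ℕ, (if act d = ε then hPMF s q lam d else 0))
      = (ε j : ℝ) * (1 + (s : ℝ) * lam j / ∑ u, lam u * (ε u : ℝ)) :=
  hPMF_conditional_expectation_general p s q lam hq hlam ε hε hεne j
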